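/- arXiv:2408.03199 — 6 statements merged into one kernel-verified Lean document; each statement's English description precedes it below -/
import Mathlib

section
/- Let φ : ℝⁿ → ℝ be differentiable with L-Lipschitz-continuous gradient (L > 0). Let x, d ∈ ℝⁿ, set g = ∇φ(x), and suppose there are constants c₁, c₂ > 0 with ‖d‖ ≤ c₁‖g‖ and ⟨d, g⟩ ≤ −c₂‖g‖². Let γ ∈ (0,1). Then for every step size α with 0 ≤ α ≤ 2c₂(1−γ)/(c₁²L), the Armijo condition φ(x + α·d) ≤ φ(x) + γ α ⟨d, g⟩ holds. -/
/-!
Along the ray `t ↦ x + t • d` the slope `⟪∇φ (x + t • d), d⟫` exceeds the initial slope `⟪g, d⟫`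
by at most `L t ‖d‖²`, so `φ` grows at most quadratically from `x`: this is the descent lemma
`φ (x + α • d) ≤ φ x + α ⟪g, d⟫ + L α² ‖d‖² / 2`. For an SGR direction the quadratic term is
at most `L α² c₁² ‖g‖² / 2`, which the bound on `α` turns into at most `(1 - γ)` times the
linear decrease `α c₂ ‖g‖²`.
-/

open scoped RealInnerProductSpace Gradient

variable {E : Type*} [NormedAddCommGroup E] [InnerProductSpace ℝ E]

section Descent

variable [CompleteSpace E] {f : E → ℝ}

theorem hasDerivAt_apply_add_smul (hf : Differentiable ℝ f) (x d : E) (t : ℝ) :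
    HasDerivAt (fun t : ℝ ↦ f (x + t • d)) ⟪∇ f (x + t • d), d⟫ t := by
  have hline : HasDerivAt (fun t : ℝ ↦ x + t • d) d t := by
    simpa using ((hasDerivAt_id t).smul_const d).const_add x
  exact (hf _).hasGradientAt.hasFDerivAt.comp_hasDerivAt t hline

theorem inner_gradient_le_of_lipschitz_gradient {L : ℝ} {x : E}
    (hlip : ∀ y, ‖∇ f y - ∇ f x‖ ≤ L * ‖y - x‖) (d : E) {t : ℝ} (ht : 0 ≤ t) :
    ⟪∇ f (x + t • d), d⟫ ≤ ⟪∇ f x, d⟫ + L * t * ‖d‖ ^ 2 := by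
  have hgrad : ‖∇ f (x + t • d) - ∇ f x‖ ≤ L * t * ‖d‖ := by
    simpa [norm_smul, abs_of_nonneg ht, mul_assoc] using hlip (x + t • d)
  calc ⟪∇ f (x + t • d), d⟫ = ⟪∇ f x, d⟫ + ⟪∇ f (x + t • d) - ∇ f x, d⟫ := by
        rw [inner_sub_left]; ring
    _ ≤ ⟪∇ f x, d⟫ + ‖∇ f (x + t • d) - ∇ f x‖ * ‖d‖ := by
        gcongr; exact real_inner_le_norm _ _
    _ ≤ ⟪∇ f x, d⟫ + L * t * ‖d‖ * ‖d‖ := by gcongr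
    _ = ⟪∇ f x, d⟫ + L * t * ‖d‖ ^ 2 := by ring

theorem apply_add_le_of_lipschitz_gradient (hf : Differentiable ℝ f) {L : ℝ} {x : E}
    (hlip : ∀ y, ‖∇ f y - ∇ f x‖ ≤ L * ‖y - x‖) (d : E) :
    f (x + d) ≤ f x + ⟪∇ f x, d⟫ + L / 2 * ‖d‖ ^ 2 := by
  have hB : ∀ t : ℝ, HasDerivAt (fun t ↦ f x + t * ⟪∇ f x, d⟫ + L / 2 * t ^ 2 * ‖d‖ ^ 2)
      (⟪∇ f x, d⟫ + L * t * ‖d‖ ^ 2) t := by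
    intro t
    refine ((((hasDerivAt_id t).mul_const _).const_add (f x)).add
      (((hasDerivAt_pow 2 t).const_mul (L / 2)).mul_const (‖d‖ ^ 2))).congr_deriv ?_
    simp only [Nat.cast_ofNat, Nat.add_one_sub_one, pow_one]
    ring
  have hfence := image_le_of_deriv_right_le_deriv_boundary (a := 0) (b := 1)
    (fun t _ ↦ (hasDerivAt_apply_add_smul hf x d t).continuousAt.continuousWithinAt)
    (fun t _ ↦ (hasDerivAt_apply_add_smul hf x d t).hasDerivWithinAt)
    (by simp) (fun t _ ↦ (hB t).continuousAt.continuousWithinAt)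
    (fun t _ ↦ (hB t).hasDerivWithinAt)
    (fun t ht ↦ inner_gradient_le_of_lipschitz_gradient hlip d ht.1)
    (Set.right_mem_Icc.2 zero_le_one)
  simpa using hfence

end Descent

theorem mul_inner_add_sq_le_of_norm_le_of_inner_le {L c₁ c₂ γ α : ℝ} {d g : E}
    (hL : 0 < L) (hc₁ : 0 < c₁) (hγ : γ ≤ 1) (hα0 : 0 ≤ α)
    (hα : α ≤ 2 * c₂ * (1 - γ) / (c₁ ^ 2 * L))
    (hd1 : ‖d‖ ≤ c₁ * ‖g‖) (hd2 : ⟪d, g⟫ ≤ -c₂ * ‖g‖ ^ 2) :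
    α * ⟪d, g⟫ + L / 2 * (α * ‖d‖) ^ 2 ≤ γ * α * ⟪d, g⟫ := by
  have hαL : α * (c₁ ^ 2 * L) ≤ 2 * c₂ * (1 - γ) := (le_div_iff₀ (by positivity)).1 hα
  have hd1' : ‖d‖ ^ 2 ≤ c₁ ^ 2 * ‖g‖ ^ 2 := by
    rw [← mul_pow]; exact pow_le_pow_left₀ (norm_nonneg d) hd1 2
  calc α * ⟪d, g⟫ + L / 2 * (α * ‖d‖) ^ 2
      ≤ α * ⟪d, g⟫ + α * (α * (c₁ ^ 2 * L)) / 2 * ‖g‖ ^ 2 := by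
        have := mul_le_mul_of_nonneg_left hd1' (by positivity : 0 ≤ L / 2 * α ^ 2)
        linarith
    _ ≤ α * ⟪d, g⟫ + α * (1 - γ) * (c₂ * ‖g‖ ^ 2) := by
        have := mul_le_mul_of_nonneg_left hαL (by positivity : 0 ≤ α * ‖g‖ ^ 2 / 2)
        linarith
    _ ≤ γ * α * ⟪d, g⟫ := by
        have := mul_le_mul_of_nonneg_left hd2 (mul_nonneg hα0 (sub_nonneg.2 hγ))
        linarith

theorem armijo_holds_for_small_steps_general
    (n : ℕ) (φ : EuclideanSpace ℝ (Fin n) → ℝ) (L : ℝ) (hL : 0 < L)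
    (hdiff : Differentiable ℝ φ)
    (hlip : ∀ y z : EuclideanSpace ℝ (Fin n), ‖gradient φ y - gradient φ z‖ ≤ L * ‖y - z‖)
    (x d : EuclideanSpace ℝ (Fin n)) (c₁ c₂ : ℝ) (hc₁ : 0 < c₁)
    (hd1 : ‖d‖ ≤ c₁ * ‖gradient φ x‖)
    (hd2 : (inner ℝ d (gradient φ x) : ℝ) ≤ -c₂ * ‖gradient φ x‖ ^ 2)
    (γ : ℝ) (hγ : γ ∈ Set.Ioo (0 : ℝ) 1)
    (α : ℝ) (hα0 : 0 ≤ α) (hα : α ≤ 2 * c₂ * (1 - γ) / (c₁ ^ 2 * L)) :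
    φ (x + α • d) ≤ φ x + γ * α * (inner ℝ d (gradient φ x) : ℝ) := by
  have hdescent := apply_add_le_of_lipschitz_gradient hdiff (fun y ↦ hlip y x) (α • d)
  rw [inner_smul_right, real_inner_comm, norm_smul, Real.norm_of_nonneg hα0] at hdescent
  have hstep := mul_inner_add_sq_le_of_norm_le_of_inner_le hL hc₁ hγ.2.le hα0 hα hd1 hd2
  linarith

/-- Finite termination interval of the Armijo condition under SGR directions. -/
theorem armijo_holds_for_small_steps
    (n : ℕ) (φ : EuclideanSpace ℝ (Fin n) → ℝ) (L : ℝ) (hL : 0 < L)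
    (hdiff : Differentiable ℝ φ)
    (hlip : ∀ y z : EuclideanSpace ℝ (Fin n), ‖gradient φ y - gradient φ z‖ ≤ L * ‖y - z‖)
    (x d : EuclideanSpace ℝ (Fin n)) (c₁ c₂ : ℝ) (hc₁ : 0 < c₁) (hc₂ : 0 < c₂)
    (hd1 : ‖d‖ ≤ c₁ * ‖gradient φ x‖)
    (hd2 : (inner ℝ d (gradient φ x) : ℝ) ≤ -c₂ * ‖gradient φ x‖ ^ 2)
    (γ : ℝ) (hγ : γ ∈ Set.Ioo (0 : ℝ) 1)
    (α : ℝ) (hα0 : 0 ≤ α) (hα : α ≤ 2 * c₂ * (1 - γ) / (c₁ ^ 2 * L)) :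
    φ (x + α • d) ≤ φ x + γ * α * (inner ℝ d (gradient φ x) : ℝ) :=
  armijo_holds_for_small_steps_general n φ L hL hdiff hlip x d c₁ c₂ hc₁ hd1 hd2 γ hγ α hα0 hα
end

section
/- Let φ : ℝⁿ → ℝ be differentiable with L-Lipschitz-continuous gradient (L > 0), let x, d ∈ ℝⁿ with g = ∇φ(x), and suppose ‖d‖ ≤ c₁‖g‖ and ⟨d, g⟩ ≤ −c₂‖g‖² for constants c₁, c₂ > 0. Let γ ∈ (0,1), δ ∈ (0,1), and let the initial step size satisfy 0 < α₀ ≤ α_max. Set α_low = 2c₂(1−γ)/(c₁²L). Let j* be the least nonnegative integer j such that the Armijo condition φ(x + α₀δʲ·d) ≤ φ(x) + γ α₀ δʲ ⟨d, g⟩ holds. Then j* ≤ max{0, ⌈log_{1/δ}(α_max/α_low)⌉}. -/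
/-!
By the descent lemma `φ (x + α d) ≤ φ x + α ⟪∇φ x, d⟫ + L α² ‖d‖² / 2` together with the two
SGR bounds, the Armijo condition holds for every step `α ≤ α_low`. The trial steps `α₀ δ ^ j`
fall below `α_low` as soon as `j ≥ log_{1/δ} (α_max / α_low)`, so the least Armijo index is at most
that.
-/

open InnerProductSpace

section
variable {F : Type*} [NormedAddCommGroup F] [InnerProductSpace ℝ F] [CompleteSpace F]

theorem DifferentiableAt.hasDerivAt_apply_add_smul {φ : F → ℝ} {x v : F} {t : ℝ}
    (hφ : DifferentiableAt ℝ φ (x + t • v)) :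
    HasDerivAt (fun s : ℝ => φ (x + s • v)) ⟪gradient φ (x + t • v), v⟫_ℝ t := by
  have hline : HasDerivAt (fun s : ℝ => x + s • v) v t := by
    simpa using ((hasDerivAt_id t).smul_const v).const_add x
  have hcomp := hφ.hasGradientAt.hasFDerivAt.comp_hasDerivAt t hline
  rwa [toDual_apply_apply] at hcomp

theorem apply_add_le_of_lipschitz_gradient_s2 {φ : F → ℝ} {L : ℝ} (hdiff : Differentiable ℝ φ)
    (hlip : ∀ y z : F, ‖gradient φ y - gradient φ z‖ ≤ L * ‖y - z‖) (x v : F) :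
    φ (x + v) ≤ φ x + ⟪gradient φ x, v⟫_ℝ + L / 2 * ‖v‖ ^ 2 := by
  have hderiv (t : ℝ) := (hdiff (x + t • v)).hasDerivAt_apply_add_smul
  have hbound : ∀ t ∈ Set.Ico (0 : ℝ) 1,
      ⟪gradient φ (x + t • v), v⟫_ℝ ≤ ⟪gradient φ x, v⟫_ℝ + L * t * ‖v‖ ^ 2 := by
    intro t ht
    have hstep : ‖gradient φ (x + t • v) - gradient φ x‖ ≤ L * (t * ‖v‖) := by
      simpa [norm_smul, abs_of_nonneg ht.1] using hlip (x + t • v) x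
    calc ⟪gradient φ (x + t • v), v⟫_ℝ
        = ⟪gradient φ x, v⟫_ℝ + ⟪gradient φ (x + t • v) - gradient φ x, v⟫_ℝ := by
          rw [inner_sub_left]; ring
      _ ≤ ⟪gradient φ x, v⟫_ℝ + ‖gradient φ (x + t • v) - gradient φ x‖ * ‖v‖ := by
          gcongr; exact real_inner_le_norm _ _
      _ ≤ ⟪gradient φ x, v⟫_ℝ + L * (t * ‖v‖) * ‖v‖ := by gcongr
      _ = ⟪gradient φ x, v⟫_ℝ + L * t * ‖v‖ ^ 2 := by ring
  have hquad (t : ℝ) : HasDerivAt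
      (fun s : ℝ => φ x + s * ⟪gradient φ x, v⟫_ℝ + L / 2 * s ^ 2 * ‖v‖ ^ 2)
      (⟪gradient φ x, v⟫_ℝ + L * t * ‖v‖ ^ 2) t :=
    ((((hasDerivAt_id t).mul_const ⟪gradient φ x, v⟫_ℝ).const_add (φ x)).add
      (((hasDerivAt_pow 2 t).const_mul (L / 2)).mul_const (‖v‖ ^ 2))).congr_deriv
        (by push_cast; ring)
  simpa using image_le_of_deriv_right_le_deriv_boundary
    (fun t _ => (hderiv t).continuousAt.continuousWithinAt)
    (fun t _ => (hderiv t).hasDerivWithinAt) (by simp)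
    (fun t _ => (hquad t).continuousAt.continuousWithinAt)
    (fun t _ => (hquad t).hasDerivWithinAt) hbound (Set.right_mem_Icc.2 zero_le_one)

theorem armijo_of_stepsize_le {φ : F → ℝ} {L c₁ c₂ γ α : ℝ} (hdiff : Differentiable ℝ φ)
    (hlip : ∀ y z : F, ‖gradient φ y - gradient φ z‖ ≤ L * ‖y - z‖) (hL : 0 ≤ L) {x d : F}
    (hd1 : ‖d‖ ≤ c₁ * ‖gradient φ x‖) (hd2 : ⟪d, gradient φ x⟫_ℝ ≤ -c₂ * ‖gradient φ x‖ ^ 2)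
    (hγ : γ ≤ 1) (hα : 0 ≤ α) (hαle : α * (c₁ ^ 2 * L) ≤ 2 * c₂ * (1 - γ)) :
    φ (x + α • d) ≤ φ x + γ * α * ⟪d, gradient φ x⟫_ℝ := by
  have hd_sq : ‖d‖ ^ 2 ≤ c₁ ^ 2 * ‖gradient φ x‖ ^ 2 := by
    rw [← mul_pow]; exact pow_le_pow_left₀ (norm_nonneg d) hd1 2
  have hcurv : α * L * ‖d‖ ^ 2 ≤ 2 * (1 - γ) * -⟪d, gradient φ x⟫_ℝ := by
    calc α * L * ‖d‖ ^ 2 ≤ α * L * (c₁ ^ 2 * ‖gradient φ x‖ ^ 2) := by gcongr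
      _ = α * (c₁ ^ 2 * L) * ‖gradient φ x‖ ^ 2 := by ring
      _ ≤ 2 * c₂ * (1 - γ) * ‖gradient φ x‖ ^ 2 := by gcongr
      _ ≤ 2 * (1 - γ) * -⟪d, gradient φ x⟫_ℝ := by nlinarith
  calc φ (x + α • d) ≤ φ x + ⟪gradient φ x, α • d⟫_ℝ + L / 2 * ‖α • d‖ ^ 2 :=
        apply_add_le_of_lipschitz_gradient_s2 hdiff hlip x (α • d)
    _ = φ x + α * ⟪d, gradient φ x⟫_ℝ + α / 2 * (α * L * ‖d‖ ^ 2) := by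
        rw [real_inner_smul_right, real_inner_comm, norm_smul, Real.norm_of_nonneg hα]; ring
    _ ≤ φ x + γ * α * ⟪d, gradient φ x⟫_ℝ := by nlinarith
end

theorem mul_pow_toNat_ceil_logb_le {δ a b : ℝ} (hδ0 : 0 < δ) (hδ1 : δ < 1) (ha : 0 < a)
    (hb : 0 < b) : a * δ ^ ⌈Real.logb (1 / δ) (a / b)⌉.toNat ≤ b := by
  set k := ⌈Real.logb (1 / δ) (a / b)⌉.toNat
  have hlog : Real.logb (1 / δ) (a / b) ≤ k := by
    have := (Int.cast_le (R := ℝ)).2 (Int.self_le_toNat ⌈Real.logb (1 / δ) (a / b)⌉)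
    push_cast at this
    exact (Int.le_ceil _).trans this
  rw [Real.logb_le_iff_le_rpow (one_lt_one_div hδ0 hδ1) (div_pos ha hb), Real.rpow_natCast,
    one_div_pow, div_le_div_iff₀ hb (by positivity)] at hlog
  linarith

/-- Upper bound on the number of backtracking steps of the Armijo line search. -/
theorem backtracking_count_upper_bound
    (n : ℕ) (φ : EuclideanSpace ℝ (Fin n) → ℝ) (L : ℝ) (hL : 0 < L)
    (hdiff : Differentiable ℝ φ)
    (hlip : ∀ y z : EuclideanSpace ℝ (Fin n), ‖gradient φ y - gradient φ z‖ ≤ L * ‖y - z‖)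
    (x d : EuclideanSpace ℝ (Fin n)) (c₁ c₂ : ℝ) (hc₁ : 0 < c₁) (hc₂ : 0 < c₂)
    (hd1 : ‖d‖ ≤ c₁ * ‖gradient φ x‖)
    (hd2 : (inner ℝ d (gradient φ x) : ℝ) ≤ -c₂ * ‖gradient φ x‖ ^ 2)
    (γ δ : ℝ) (hγ : γ ∈ Set.Ioo (0 : ℝ) 1) (hδ : δ ∈ Set.Ioo (0 : ℝ) 1)
    (α₀ αmax : ℝ) (hα₀ : 0 < α₀) (hα₀max : α₀ ≤ αmax)
    (αlow : ℝ) (hαlow : αlow = 2 * c₂ * (1 - γ) / (c₁ ^ 2 * L))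
    (jstar : ℕ)
    (hjstar : IsLeast {j : ℕ |
      φ (x + (α₀ * δ ^ j) • d) ≤ φ x + γ * (α₀ * δ ^ j) * (inner ℝ d (gradient φ x) : ℝ)} jstar) :
    (jstar : ℤ) ≤ max 0 ⌈Real.logb (1 / δ) (αmax / αlow)⌉ := by
  set k := ⌈Real.logb (1 / δ) (αmax / αlow)⌉.toNat
  have hcL : 0 < c₁ ^ 2 * L := by positivity
  have hαlow_pos : 0 < αlow := by
    rw [hαlow]; exact div_pos (mul_pos (by positivity) (sub_pos.2 hγ.2)) hcL
  have hstep : α₀ * δ ^ k ≤ αlow :=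
    (mul_le_mul_of_nonneg_right hα₀max (by positivity [hδ.1])).trans
      (mul_pow_toNat_ceil_logb_le hδ.1 hδ.2 (hα₀.trans_le hα₀max) hαlow_pos)
  have harmijo : φ (x + (α₀ * δ ^ k) • d) ≤ φ x + γ * (α₀ * δ ^ k) * ⟪d, gradient φ x⟫_ℝ := by
    refine armijo_of_stepsize_le hdiff hlip hL.le hd1 hd2 hγ.2.le (by positivity [hδ.1]) ?_
    rwa [← le_div_iff₀ hcL, ← hαlow]
  calc (jstar : ℤ) ≤ k := Nat.cast_le.2 (hjstar.2 harmijo)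
    _ = max 0 ⌈Real.logb (1 / δ) (αmax / αlow)⌉ := by rw [Int.toNat_eq_max, max_comm]
end

section
/- Let (Ω, 𝓕, P) be a probability space and let d, g : Ω → ℝⁿ be square-integrable random vectors with G := E[g]. Suppose: (i) ‖d(ω)‖ ≤ c₁‖g(ω)‖ and ⟨d(ω), g(ω)⟩ ≤ −c₂‖g(ω)‖² almost surely, with c₁, c₂ > 0; (ii) E[‖g‖²] ≤ ρ‖G‖² with ρ > 0; (iii) Cov(d, g) ≥ −c₃ Var(g) with c₃ > 0; and (iv) c₂ > c₃(1 − 1/ρ). Then ⟨E[d], G⟩ ≤ −(c₂ − c₃(1 − 1/ρ)) ‖G‖². -/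
open MeasureTheory
open scoped RealInnerProductSpace

/-!
The SGR inequality gives `E⟨d, g⟩ ≤ -c₂ E‖g‖²`, and the covariance bound transfers it to
`⟨E d, G⟩` at the cost of `c₃ Var(g)`. Strong growth bounds `Var(g) = E‖g‖² - ‖G‖²` by
`(1 - 1/ρ) E‖g‖²`, and Jensen's `‖G‖² ≤ E‖g‖²` turns the resulting negative multiple of
`E‖g‖²` into one of `‖G‖²`.
-/

section

variable {Ω E : Type*} [MeasurableSpace Ω] {P : Measure Ω}
  [NormedAddCommGroup E] [InnerProductSpace ℝ E] {d g : Ω → E}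

theorem MeasureTheory.MemLp.integrable_inner (hd : MemLp d 2 P) (hg : MemLp g 2 P) :
    Integrable (fun ω ↦ ⟪d ω, g ω⟫) P := by
  refine (L2.integrable_inner (𝕜 := ℝ) (hd.toLp d) (hg.toLp g)).congr ?_
  filter_upwards [hd.coeFn_toLp, hg.coeFn_toLp] with ω hdω hgω
  rw [hdω, hgω]

theorem integral_inner_le_neg_mul_integral_sq_norm {c : ℝ} (hd : MemLp d 2 P)
    (hg : MemLp g 2 P) (h : ∀ᵐ ω ∂P, ⟪d ω, g ω⟫ ≤ -c * ‖g ω‖ ^ 2) :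
    ∫ ω, ⟪d ω, g ω⟫ ∂P ≤ -c * ∫ ω, ‖g ω‖ ^ 2 ∂P := by
  rw [← integral_const_mul]
  exact integral_mono_ae (hd.integrable_inner hg) (hg.norm.integrable_sq.const_mul _) h

theorem sq_norm_integral_le_integral_sq_norm [IsProbabilityMeasure P] (hg : MemLp g 2 P) :
    ‖∫ ω, g ω ∂P‖ ^ 2 ≤ ∫ ω, ‖g ω‖ ^ 2 ∂P := by
  have hnorm_sq : (∫ ω, ‖g ω‖ ∂P) ^ 2 ≤ ∫ ω, ‖g ω‖ ^ 2 ∂P := by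
    have := ProbabilityTheory.variance_nonneg (fun ω ↦ ‖g ω‖) P
    rw [ProbabilityTheory.variance_eq_sub hg.norm] at this
    simpa only [sub_nonneg, Pi.pow_apply] using this
  calc ‖∫ ω, g ω ∂P‖ ^ 2 ≤ (∫ ω, ‖g ω‖ ∂P) ^ 2 := by
        gcongr; exact norm_integral_le_integral_norm g
    _ ≤ ∫ ω, ‖g ω‖ ^ 2 ∂P := hnorm_sq

end

theorem sub_le_one_sub_one_div_mul {V h ρ : ℝ} (hρ : 0 < ρ) (hV : V ≤ ρ * h) :
    V - h ≤ (1 - 1 / ρ) * V := by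
  have : V / ρ ≤ h := (div_le_iff₀ hρ).2 (by linarith)
  linarith [show (1 - 1 / ρ) * V = V - V / ρ by ring]

theorem expected_direction_inner_bound_general
    {Ω : Type*} [MeasurableSpace Ω] (P : Measure Ω) [IsProbabilityMeasure P]
    (n : ℕ) (d g : Ω → EuclideanSpace ℝ (Fin n))
    (hd2 : MemLp d 2 P) (hg2 : MemLp g 2 P)
    (G : EuclideanSpace ℝ (Fin n)) (hG : G = ∫ ω, g ω ∂P)
    (c₁ c₂ c₃ ρ : ℝ) (hc₃ : 0 < c₃) (hρ : 0 < ρ)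
    (hsgr : ∀ᵐ ω ∂P, ‖d ω‖ ≤ c₁ * ‖g ω‖ ∧
      (inner ℝ (d ω) (g ω) : ℝ) ≤ -c₂ * ‖g ω‖ ^ 2)
    (hSGC : ∫ ω, ‖g ω‖ ^ 2 ∂P ≤ ρ * ‖G‖ ^ 2)
    (hCov : (∫ ω, (inner ℝ (d ω) (g ω) : ℝ) ∂P) - (inner ℝ (∫ ω, d ω ∂P) G : ℝ) ≥
      -c₃ * ((∫ ω, ‖g ω‖ ^ 2 ∂P) - ‖G‖ ^ 2))
    (hc : c₂ > c₃ * (1 - 1 / ρ)) :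
    (inner ℝ (∫ ω, d ω ∂P) G : ℝ) ≤ -(c₂ - c₃ * (1 - 1 / ρ)) * ‖G‖ ^ 2 := by
  set V := ∫ ω, ‖g ω‖ ^ 2 ∂P
  have hdescent : ∫ ω, ⟪d ω, g ω⟫ ∂P ≤ -c₂ * V :=
    integral_inner_le_neg_mul_integral_sq_norm hd2 hg2 (hsgr.mono fun _ h ↦ h.2)
  have hjensen : ‖G‖ ^ 2 ≤ V := hG ▸ sq_norm_integral_le_integral_sq_norm hg2
  have hvar : V - ‖G‖ ^ 2 ≤ (1 - 1 / ρ) * V := sub_le_one_sub_one_div_mul hρ hSGC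
  calc ⟪∫ ω, d ω ∂P, G⟫ ≤ ∫ ω, ⟪d ω, g ω⟫ ∂P + c₃ * (V - ‖G‖ ^ 2) := by linarith
    _ ≤ -c₂ * V + c₃ * ((1 - 1 / ρ) * V) := by gcongr
    _ = -(c₂ - c₃ * (1 - 1 / ρ)) * V := by ring
    _ ≤ -(c₂ - c₃ * (1 - 1 / ρ)) * ‖G‖ ^ 2 := mul_le_mul_of_nonpos_left hjensen (by linarith)

/-- Expected directional derivative bound under SGR, strong growth and a
covariance lower bound (Lemma on Bottou-like conditions). -/
theorem expected_direction_inner_bound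
    {Ω : Type*} [MeasurableSpace Ω] (P : Measure Ω) [IsProbabilityMeasure P]
    (n : ℕ) (d g : Ω → EuclideanSpace ℝ (Fin n))
    (hd2 : MemLp d 2 P) (hg2 : MemLp g 2 P)
    (G : EuclideanSpace ℝ (Fin n)) (hG : G = ∫ ω, g ω ∂P)
    (c₁ c₂ c₃ ρ : ℝ) (hc₁ : 0 < c₁) (hc₂ : 0 < c₂) (hc₃ : 0 < c₃) (hρ : 0 < ρ)
    (hsgr : ∀ᵐ ω ∂P, ‖d ω‖ ≤ c₁ * ‖g ω‖ ∧
      (inner ℝ (d ω) (g ω) : ℝ) ≤ -c₂ * ‖g ω‖ ^ 2)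
    (hSGC : ∫ ω, ‖g ω‖ ^ 2 ∂P ≤ ρ * ‖G‖ ^ 2)
    (hCov : (∫ ω, (inner ℝ (d ω) (g ω) : ℝ) ∂P) - (inner ℝ (∫ ω, d ω ∂P) G : ℝ) ≥
      -c₃ * ((∫ ω, ‖g ω‖ ^ 2 ∂P) - ‖G‖ ^ 2))
    (hc : c₂ > c₃ * (1 - 1 / ρ)) :
    (inner ℝ (∫ ω, d ω ∂P) G : ℝ) ≤ -(c₂ - c₃ * (1 - 1 / ρ)) * ‖G‖ ^ 2 :=
  expected_direction_inner_bound_general P n d g hd2 hg2 G hG c₁ c₂ c₃ ρ hc₃ hρ hsgr hSGC hCov hc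
end

section
/- Let f : ℝⁿ → ℝ be differentiable with L-Lipschitz-continuous gradient (L > 0), attaining its global minimum f* = f(x*) at x*, and satisfying the Polyak–Łojasiewicz condition 2μ(f(y) − f*) ≤ ‖∇f(y)‖² for all y, with μ > 0. Fix x ∈ ℝⁿ. Let (Ω, 𝓕, P) be a probability space and F : Ω × ℝⁿ → ℝ be such that F(ω, ·) is differentiable for every ω; write g(ω) = ∇₂F(ω, x). Assume: (i) unbiasedness: E[F(·, x)] = f(x), E[F(·, x*)] = f(x*), and E[g] = ∇f(x); (ii) interpolation: F(ω, x*) ≤ F(ω, y) for all ω and all y; (iii) a random direction d : Ω → ℝⁿ satisfies ‖d(ω)‖ ≤ c₁‖g(ω)‖ and ⟨d(ω), g(ω)⟩ ≤ −c₂‖g(ω)‖² almost surely, with c₁, c₂ > 0; (iv) E[‖g‖²] ≤ ρ‖∇f(x)‖² with ρ > 0, and Cov(d, g) ≥ −c₃ Var(g) with c₃ > 0 and σ := c₂ − c₃(1 − 1/ρ) > 0; (v) a random step size α : Ω → ℝ satisfies 0 < α_min ≤ α(ω) ≤ α_max and the Armijo condition F(ω, x + α(ω)·d(ω)) ≤ F(ω,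 x) + γ α(ω) ⟨d(ω), g(ω)⟩ for all ω, with γ ∈ (0,1); (vi) all the required integrability holds (in particular ω ↦ f(x + α(ω)d(ω)), g, d, ⟨d, g⟩, ‖g‖², F(·, x), F(·, x*) are integrable). Then E[f(x + α·d) − f*] ≤ α_max · (L c₁²/(2γc₂) − 2σμ + 1/α_min) · (f(x) − f*). -/
open MeasureTheory

open scoped RealInnerProductSpace

/-! With `Δ = f x - f xstar`, the descent lemma bounds `f (x + α • d) - f xstar` by
`Δ + α ⟪∇f x, d⟫ + L/2 α² ‖d‖²`. This bound is nonnegative since `xstar` minimizes `f`, so it may be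
scaled by `αmax / α ≥ 1`: the first-order term becomes `αmax ⟪∇f x, d⟫`, no longer coupled to the
random step, at the price of a factor `αmax / αmin` on `Δ`. Armijo and interpolation give
`α ‖g‖² ≤ (F x - F xstar) / (γ c₂)`, whose expectation is `Δ / (γ c₂)`, which controls the quadratic
term. In expectation, the covariance and strong-growth bounds together with Jensen's inequality
`‖E g‖² ≤ E ‖g‖²` give `⟪E d, ∇f x⟫ ≤ -σ ‖∇f x‖²`, and PL turns this into `-2σμΔ`. -/

section Descent

variable {E : Type*} [NormedAddCommGroup E] [InnerProductSpace ℝ E]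

theorem descent_lemma [CompleteSpace E] {f : E → ℝ} {L : ℝ} (hf : Differentiable ℝ f)
    (hlip : ∀ y z, ‖gradient f y - gradient f z‖ ≤ L * ‖y - z‖) (x y : E) :
    f y ≤ f x + ⟪gradient f x, y - x⟫ + L / 2 * ‖y - x‖ ^ 2 := by
  set v := y - x
  let φ : ℝ → ℝ := fun t => f (x + t • v) - t * ⟪gradient f x, v⟫ - L / 2 * t ^ 2 * ‖v‖ ^ 2
  have hφ : ∀ t, HasDerivAt φ
      (⟪gradient f (x + t • v), v⟫ - ⟪gradient f x, v⟫ - L * t * ‖v‖ ^ 2) t := by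
    intro t
    have hline : HasDerivAt (fun s : ℝ => x + s • v) v t := by
      simpa using ((hasDerivAt_id t).smul_const v).const_add x
    refine ((((hf _).hasGradientAt.hasFDerivAt.comp_hasDerivAt t hline).sub
      ((hasDerivAt_id t).mul_const ⟪gradient f x, v⟫)).sub
      (((hasDerivAt_pow 2 t).const_mul (L / 2)).mul_const (‖v‖ ^ 2))).congr_deriv ?_
    rw [InnerProductSpace.toDual_apply_apply]
    ring
  have hanti : AntitoneOn φ (Set.Ici 0) := by
    refine antitoneOn_of_hasDerivWithinAt_nonpos (convex_Ici 0)
      (fun t _ => (hφ t).continuousAt.continuousWithinAt)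
      (fun t _ => (hφ t).hasDerivWithinAt) fun t ht => ?_
    rw [interior_Ici] at ht
    have hgrad : ⟪gradient f (x + t • v) - gradient f x, v⟫ ≤ L * t * ‖v‖ ^ 2 := calc
      _ ≤ ‖gradient f (x + t • v) - gradient f x‖ * ‖v‖ := real_inner_le_norm _ _
      _ ≤ L * ‖t • v‖ * ‖v‖ := by
        gcongr; simpa using hlip (x + t • v) x
      _ = L * t * ‖v‖ ^ 2 := by
        rw [norm_smul, Real.norm_of_nonneg (le_of_lt ht)]; ring
    rw [inner_sub_left] at hgrad
    linarith
  have hφ01 := hanti Set.self_mem_Ici (Set.mem_Ici.2 zero_le_one) zero_le_one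
  simp only [φ, v, one_smul, zero_smul, add_zero, add_sub_cancel, one_pow, one_mul, zero_mul,
    sub_zero, zero_pow two_ne_zero, mul_zero] at hφ01
  linarith

theorem sub_min_le_of_step_mem_Icc [CompleteSpace E] {f : E → ℝ} {L : ℝ} (hf : Differentiable ℝ f)
    (hlip : ∀ y z, ‖gradient f y - gradient f z‖ ≤ L * ‖y - z‖) {xstar : E}
    (hmin : ∀ y, f xstar ≤ f y) (x d : E) {a αmin αmax : ℝ} (hαmin : 0 < αmin)
    (ha : a ∈ Set.Icc αmin αmax) :
    f (x + a • d) - f xstar ≤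
      αmax / αmin * (f x - f xstar) + αmax * ⟪gradient f x, d⟫ + L / 2 * αmax * (a * ‖d‖ ^ 2) := by
  obtain ⟨hαmin_le, hle_αmax⟩ := ha
  have ha0 : 0 < a := hαmin.trans_le hαmin_le
  have hdescent := descent_lemma hf hlip x (x + a • d)
  rw [add_sub_cancel_left, real_inner_smul_right, norm_smul, Real.norm_of_nonneg ha0.le] at hdescent
  have hscale : 1 ≤ αmax / a := (one_le_div ha0).2 hle_αmax
  calc f (x + a • d) - f xstar
      ≤ f x - f xstar + a * ⟪gradient f x, d⟫ + L / 2 * (a * ‖d‖) ^ 2 := by linarith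
    _ ≤ αmax / a * (f x - f xstar + a * ⟪gradient f x, d⟫ + L / 2 * (a * ‖d‖) ^ 2) :=
        le_mul_of_one_le_left (by linarith [hmin (x + a • d)]) hscale
    _ = αmax / a * (f x - f xstar) + αmax * ⟪gradient f x, d⟫ + L / 2 * αmax * (a * ‖d‖ ^ 2) := by
        field_simp
    _ ≤ αmax / αmin * (f x - f xstar) + αmax * ⟪gradient f x, d⟫ + L / 2 * αmax * (a * ‖d‖ ^ 2) := by
        gcongr
        · linarith [hmin x]
        · linarith

theorem mul_sq_norm_le_of_armijo {φ : E → ℝ} {x xstar d g : E} {a γ c₂ : ℝ} (hγ : 0 < γ)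
    (hc₂ : 0 < c₂) (ha : 0 ≤ a) (harmijo : φ (x + a • d) ≤ φ x + γ * a * ⟪d, g⟫)
    (hsgr : ⟪d, g⟫ ≤ -c₂ * ‖g‖ ^ 2) (hinterp : φ xstar ≤ φ (x + a • d)) :
    a * ‖g‖ ^ 2 ≤ (φ x - φ xstar) / (γ * c₂) := by
  rw [le_div_iff₀ (mul_pos hγ hc₂)]
  have := mul_le_mul_of_nonneg_left hsgr (mul_nonneg hγ.le ha)
  linarith

theorem sub_min_le_of_armijo [CompleteSpace E] {f φ : E → ℝ} {L : ℝ} (hL : 0 ≤ L)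
    (hf : Differentiable ℝ f) (hlip : ∀ y z, ‖gradient f y - gradient f z‖ ≤ L * ‖y - z‖)
    {xstar : E} (hmin : ∀ y, f xstar ≤ f y) {x d g : E} {a αmin αmax γ c₁ c₂ : ℝ}
    (hαmin : 0 < αmin) (ha : a ∈ Set.Icc αmin αmax) (hγ : 0 < γ) (hc₂ : 0 < c₂)
    (hnorm : ‖d‖ ≤ c₁ * ‖g‖) (hsgr : ⟪d, g⟫ ≤ -c₂ * ‖g‖ ^ 2)
    (harmijo : φ (x + a • d) ≤ φ x + γ * a * ⟪d, g⟫) (hinterp : φ xstar ≤ φ (x + a • d)) :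
    f (x + a • d) - f xstar ≤ αmax / αmin * (f x - f xstar) + αmax * ⟪gradient f x, d⟫
      + L * c₁ ^ 2 / (2 * γ * c₂) * αmax * (φ x - φ xstar) := by
  have ha0 : 0 ≤ a := hαmin.le.trans ha.1
  have hαmax : 0 ≤ αmax := ha0.trans ha.2
  have hquad : L / 2 * αmax * (a * ‖d‖ ^ 2) ≤
      L * c₁ ^ 2 / (2 * γ * c₂) * αmax * (φ x - φ xstar) := calc
    L / 2 * αmax * (a * ‖d‖ ^ 2) ≤ L / 2 * αmax * (a * (c₁ * ‖g‖) ^ 2) := by gcongr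
    _ = L / 2 * αmax * c₁ ^ 2 * (a * ‖g‖ ^ 2) := by ring
    _ ≤ L / 2 * αmax * c₁ ^ 2 * ((φ x - φ xstar) / (γ * c₂)) := by
        gcongr; exact mul_sq_norm_le_of_armijo hγ hc₂ ha0 harmijo hsgr hinterp
    _ = L * c₁ ^ 2 / (2 * γ * c₂) * αmax * (φ x - φ xstar) := by ring
  linarith [sub_min_le_of_step_mem_Icc hf hlip hmin x d hαmin ha]

end Descent

section Moments

variable {Ω E : Type*} [MeasurableSpace Ω] {P : Measure Ω} [IsProbabilityMeasure P]
  [NormedAddCommGroup E] [InnerProductSpace ℝ E] [CompleteSpace E]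

theorem sq_norm_integral_le_integral_sq_norm_s5 {g : Ω → E} (hg : Integrable g P)
    (hg2 : Integrable (fun ω => ‖g ω‖ ^ 2) P) : ‖∫ ω, g ω ∂P‖ ^ 2 ≤ ∫ ω, ‖g ω‖ ^ 2 ∂P :=
  (convexOn_univ_norm.pow (fun _ _ => norm_nonneg _) 2).map_integral_le
    (by fun_prop) isClosed_univ (by simp) hg hg2

theorem inner_integral_le_neg_mul_sq_norm_integral {d g : Ω → E} {c₂ c₃ ρ σ : ℝ}
    (hg : Integrable g P) (hg2 : Integrable (fun ω => ‖g ω‖ ^ 2) P)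
    (hdg : Integrable (fun ω => ⟪d ω, g ω⟫) P)
    (hsgr : ∀ᵐ ω ∂P, ⟪d ω, g ω⟫ ≤ -c₂ * ‖g ω‖ ^ 2)
    (hρ : 0 < ρ) (hSGC : ∫ ω, ‖g ω‖ ^ 2 ∂P ≤ ρ * ‖∫ ω, g ω ∂P‖ ^ 2) (hc₃ : 0 ≤ c₃)
    (hCov : ∫ ω, ⟪d ω, g ω⟫ ∂P - ⟪∫ ω, d ω ∂P, ∫ ω, g ω ∂P⟫ ≥
      -c₃ * (∫ ω, ‖g ω‖ ^ 2 ∂P - ‖∫ ω, g ω ∂P‖ ^ 2))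
    (hσ : σ = c₂ - c₃ * (1 - 1 / ρ)) (hσ0 : 0 ≤ σ) :
    ⟪∫ ω, d ω ∂P, ∫ ω, g ω ∂P⟫ ≤ -σ * ‖∫ ω, g ω ∂P‖ ^ 2 := by
  set S := ∫ ω, ‖g ω‖ ^ 2 ∂P
  set m := ‖∫ ω, g ω ∂P‖ ^ 2
  have hinner : ∫ ω, ⟪d ω, g ω⟫ ∂P ≤ -c₂ * S := by
    rw [← integral_const_mul]
    exact integral_mono_ae hdg (hg2.const_mul _) hsgr
  have hSm : S / ρ ≤ m := (div_le_iff₀' hρ).2 hSGC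
  calc ⟪∫ ω, d ω ∂P, ∫ ω, g ω ∂P⟫
      ≤ -c₂ * S + c₃ * (S - m) := by linarith
    _ ≤ -c₂ * S + c₃ * (S - S / ρ) := by gcongr
    _ = -σ * S := by rw [hσ]; ring
    _ ≤ -σ * m := by
        rw [neg_mul, neg_mul, neg_le_neg_iff]
        exact mul_le_mul_of_nonneg_left (sq_norm_integral_le_integral_sq_norm_s5 hg hg2) hσ0

theorem integral_le_of_ae_le_add_inner {Y Z : Ω → ℝ} {d : Ω → E} {C a M : ℝ} {v : E}
    (hY : Integrable Y P) (hd : Integrable d P) (hZ : Integrable Z P)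
    (hle : ∀ᵐ ω ∂P, Y ω ≤ C + a * ⟪v, d ω⟫ + M * Z ω) :
    ∫ ω, Y ω ∂P ≤ C + a * ⟪v, ∫ ω, d ω ∂P⟫ + M * ∫ ω, Z ω ∂P := by
  have hlin : Integrable (fun ω => a * ⟪v, d ω⟫) P := (hd.const_inner v).const_mul a
  have hconst_lin : Integrable (fun ω => C + a * ⟪v, d ω⟫) P := (integrable_const C).add hlin
  refine (integral_mono_ae hY ?_ hle).trans_eq ?_
  · exact hconst_lin.add (hZ.const_mul M)
  rw [integral_add hconst_lin (hZ.const_mul M), integral_add (integrable_const C) hlin,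
    integral_const, probReal_univ, one_smul, integral_const_mul, integral_const_mul,
    integral_inner hd]

end Moments

theorem expected_one_step_decrease_general
    (n : ℕ) (f : EuclideanSpace ℝ (Fin n) → ℝ) (L : ℝ) (hL : 0 < L)
    (hfdiff : Differentiable ℝ f)
    (hflip : ∀ y z : EuclideanSpace ℝ (Fin n), ‖gradient f y - gradient f z‖ ≤ L * ‖y - z‖)
    (xstar : EuclideanSpace ℝ (Fin n)) (hmin : ∀ y, f xstar ≤ f y)
    (μ : ℝ)
    (hPL : ∀ y, 2 * μ * (f y - f xstar) ≤ ‖gradient f y‖ ^ 2)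
    (x : EuclideanSpace ℝ (Fin n))
    {Ω : Type*} [MeasurableSpace Ω] (P : Measure Ω) [IsProbabilityMeasure P]
    (F : Ω → EuclideanSpace ℝ (Fin n) → ℝ)
    (g : Ω → EuclideanSpace ℝ (Fin n))
    -- (i) unbiasedness
    (hunb₁ : (∫ ω, F ω x ∂P) = f x)
    (hunb₂ : (∫ ω, F ω xstar ∂P) = f xstar)
    (hunb₃ : (∫ ω, g ω ∂P) = gradient f x)
    -- (ii) interpolation
    (hinterp : ∀ ω, ∀ y, F ω xstar ≤ F ω y)
    -- (iii) SGR direction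
    (d : Ω → EuclideanSpace ℝ (Fin n)) (c₁ c₂ : ℝ) (hc₂ : 0 < c₂)
    (hsgr : ∀ᵐ ω ∂P, ‖d ω‖ ≤ c₁ * ‖g ω‖ ∧
      (inner ℝ (d ω) (g ω) : ℝ) ≤ -c₂ * ‖g ω‖ ^ 2)
    -- (iv) strong growth at x and covariance bound
    (ρ : ℝ) (hρ : 0 < ρ)
    (hSGC : ∫ ω, ‖g ω‖ ^ 2 ∂P ≤ ρ * ‖gradient f x‖ ^ 2)
    (c₃ : ℝ) (hc₃ : 0 < c₃)
    (hCov : (∫ ω, (inner ℝ (d ω) (g ω) : ℝ) ∂P) -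
        (inner ℝ (∫ ω, d ω ∂P) (∫ ω, g ω ∂P) : ℝ) ≥
      -c₃ * ((∫ ω, ‖g ω‖ ^ 2 ∂P) - ‖∫ ω, g ω ∂P‖ ^ 2))
    (σ : ℝ) (hσdef : σ = c₂ - c₃ * (1 - 1 / ρ)) (hσpos : 0 < σ)
    -- (v) step sizes satisfying the Armijo condition
    (α : Ω → ℝ) (αmin αmax : ℝ) (hαmin : 0 < αmin)
    (hα : ∀ ω, αmin ≤ α ω ∧ α ω ≤ αmax)
    (γ : ℝ) (hγ : γ ∈ Set.Ioo (0 : ℝ) 1)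
    (harmijo : ∀ ω, F ω (x + α ω • d ω) ≤ F ω x + γ * α ω * (inner ℝ (d ω) (g ω) : ℝ))
    -- (vi) integrability
    (hint₁ : Integrable (fun ω => f (x + α ω • d ω)) P)
    (hint₂ : Integrable g P)
    (hint₃ : Integrable d P)
    (hint₄ : Integrable (fun ω => (inner ℝ (d ω) (g ω) : ℝ)) P)
    (hint₅ : Integrable (fun ω => ‖g ω‖ ^ 2) P)
    (hint₆ : Integrable (fun ω => F ω x) P)
    (hint₇ : Integrable (fun ω => F ω xstar) P) :
    (∫ ω, (f (x + α ω • d ω) - f xstar) ∂P) ≤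
      αmax * (L * c₁ ^ 2 / (2 * γ * c₂) - 2 * σ * μ + 1 / αmin) * (f x - f xstar) := by
  have hαmax : 0 ≤ αmax := by
    obtain ⟨ω⟩ := nonempty_of_isProbabilityMeasure P
    exact hαmin.le.trans ((hα ω).1.trans (hα ω).2)
  set M := L * c₁ ^ 2 / (2 * γ * c₂) * αmax
  have hpointwise : ∀ᵐ ω ∂P, f (x + α ω • d ω) - f xstar ≤ αmax / αmin * (f x - f xstar)
      + αmax * ⟪gradient f x, d ω⟫ + M * (F ω x - F ω xstar) := by
    filter_upwards [hsgr] with ω ⟨hnorm, hinner⟩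
    exact sub_min_le_of_armijo hL.le hfdiff hflip hmin hαmin (hα ω) hγ.1 hc₂ hnorm hinner
      (harmijo ω) (hinterp ω _)
  have hexpect := integral_le_of_ae_le_add_inner (Y := fun ω => f (x + α ω • d ω) - f xstar)
    (Z := fun ω => F ω x - F ω xstar) (hint₁.sub (integrable_const _)) hint₃ (hint₆.sub hint₇)
    hpointwise
  rw [integral_sub hint₆ hint₇, hunb₁, hunb₂] at hexpect
  have hdrift : ⟪∫ ω, d ω ∂P, ∫ ω, g ω ∂P⟫ ≤ -σ * ‖∫ ω, g ω ∂P‖ ^ 2 :=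
    inner_integral_le_neg_mul_sq_norm_integral hint₂ hint₅ hint₄ (hsgr.mono fun _ h => h.2) hρ
      (hunb₃ ▸ hSGC) hc₃.le hCov hσdef hσpos.le
  rw [hunb₃, real_inner_comm] at hdrift
  have hαdrift := mul_le_mul_of_nonneg_left hdrift hαmax
  have hPL_drift := mul_le_mul_of_nonneg_left (hPL x) (mul_nonneg hαmax hσpos.le)
  calc ∫ ω, (f (x + α ω • d ω) - f xstar) ∂P
      ≤ αmax / αmin * (f x - f xstar) + αmax * (-σ * (2 * μ * (f x - f xstar)))
        + M * (f x - f xstar) := by linarith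
    _ = αmax * (L * c₁ ^ 2 / (2 * γ * c₂) - 2 * σ * μ + 1 / αmin) * (f x - f xstar) := by
        simp only [M]; field_simp; ring

/-- One-step linear decrease in expectation for stochastic-line-search methods
with SGR directions under the PL condition and interpolation (main theorem, one iteration). -/
theorem expected_one_step_decrease
    (n : ℕ) (f : EuclideanSpace ℝ (Fin n) → ℝ) (L : ℝ) (hL : 0 < L)
    (hfdiff : Differentiable ℝ f)
    (hflip : ∀ y z : EuclideanSpace ℝ (Fin n), ‖gradient f y - gradient f z‖ ≤ L * ‖y - z‖)
    (xstar : EuclideanSpace ℝ (Fin n)) (hmin : ∀ y, f xstar ≤ f y)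
    (μ : ℝ) (hμ : 0 < μ)
    (hPL : ∀ y, 2 * μ * (f y - f xstar) ≤ ‖gradient f y‖ ^ 2)
    (x : EuclideanSpace ℝ (Fin n))
    {Ω : Type*} [MeasurableSpace Ω] (P : Measure Ω) [IsProbabilityMeasure P]
    (F : Ω → EuclideanSpace ℝ (Fin n) → ℝ)
    (hFdiff : ∀ ω, Differentiable ℝ (F ω))
    (g : Ω → EuclideanSpace ℝ (Fin n)) (hg : ∀ ω, g ω = gradient (F ω) x)
    -- (i) unbiasedness
    (hunb₁ : (∫ ω, F ω x ∂P) = f x)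
    (hunb₂ : (∫ ω, F ω xstar ∂P) = f xstar)
    (hunb₃ : (∫ ω, g ω ∂P) = gradient f x)
    -- (ii) interpolation
    (hinterp : ∀ ω, ∀ y, F ω xstar ≤ F ω y)
    -- (iii) SGR direction
    (d : Ω → EuclideanSpace ℝ (Fin n)) (c₁ c₂ : ℝ) (hc₁ : 0 < c₁) (hc₂ : 0 < c₂)
    (hsgr : ∀ᵐ ω ∂P, ‖d ω‖ ≤ c₁ * ‖g ω‖ ∧
      (inner ℝ (d ω) (g ω) : ℝ) ≤ -c₂ * ‖g ω‖ ^ 2)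
    -- (iv) strong growth at x and covariance bound
    (ρ : ℝ) (hρ : 0 < ρ)
    (hSGC : ∫ ω, ‖g ω‖ ^ 2 ∂P ≤ ρ * ‖gradient f x‖ ^ 2)
    (c₃ : ℝ) (hc₃ : 0 < c₃)
    (hCov : (∫ ω, (inner ℝ (d ω) (g ω) : ℝ) ∂P) -
        (inner ℝ (∫ ω, d ω ∂P) (∫ ω, g ω ∂P) : ℝ) ≥
      -c₃ * ((∫ ω, ‖g ω‖ ^ 2 ∂P) - ‖∫ ω, g ω ∂P‖ ^ 2))
    (σ : ℝ) (hσdef : σ = c₂ - c₃ * (1 - 1 / ρ)) (hσpos : 0 < σ)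
    -- (v) step sizes satisfying the Armijo condition
    (α : Ω → ℝ) (αmin αmax : ℝ) (hαmin : 0 < αmin)
    (hα : ∀ ω, αmin ≤ α ω ∧ α ω ≤ αmax)
    (γ : ℝ) (hγ : γ ∈ Set.Ioo (0 : ℝ) 1)
    (harmijo : ∀ ω, F ω (x + α ω • d ω) ≤ F ω x + γ * α ω * (inner ℝ (d ω) (g ω) : ℝ))
    -- (vi) integrability
    (hint₁ : Integrable (fun ω => f (x + α ω • d ω)) P)
    (hint₂ : Integrable g P)
    (hint₃ : Integrable d P)
    (hint₄ : Integrable (fun ω => (inner ℝ (d ω) (g ω) : ℝ)) P)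
    (hint₅ : Integrable (fun ω => ‖g ω‖ ^ 2) P)
    (hint₆ : Integrable (fun ω => F ω x) P)
    (hint₇ : Integrable (fun ω => F ω xstar) P) :
    (∫ ω, (f (x + α ω • d ω) - f xstar) ∂P) ≤
      αmax * (L * c₁ ^ 2 / (2 * γ * c₂) - 2 * σ * μ + 1 / αmin) * (f x - f xstar) :=
  expected_one_step_decrease_general n f L hL hfdiff hflip xstar hmin μ hPL x P F g hunb₁ hunb₂
    hunb₃ hinterp d c₁ c₂ hc₂ hsgr ρ hρ hSGC c₃ hc₃ hCov σ hσdef hσpos α αmin αmax hαmin hα γ hγ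
    harmijo hint₁ hint₂ hint₃ hint₄ hint₅ hint₆ hint₇
end

section
/- Let (Ω, 𝓕, P) be a probability space, let H : Ω → Mat_{n×n}(ℝ) be an integrable random matrix and g : Ω → ℝⁿ an integrable random vector with E[g] = G. Suppose that almost surely H(ω) is symmetric with all eigenvalues in [c₂, c₁], where 0 < c₂ ≤ c₁, and suppose H and g are uncorrelated in the sense that E[H g] = E[H] G. Then the random direction d = −H g satisfies ‖E[d]‖ ≤ c₁‖G‖ and ⟨E[d], G⟩ ≤ −c₂‖G‖². -/
open MeasureTheory RCLike

/-!
Averaging the pointwise bounds c₂‖v‖² ≤ ⟪v, H v⟫ ≤ c₁‖v‖² shows that the mean preconditioner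
E[H] is symmetric with the same quadratic-form bounds, hence has operator norm at most c₁
(for a symmetric operator the norm is the supremum of the Rayleigh quotient). Uncorrelatedness
turns E[d] into −E[H] G, and both claims are then statements about E[H] alone.
-/

theorem LinearMap.IsSymmetric.norm_apply_le_of_abs_inner_le {𝕜 E : Type*} [RCLike 𝕜]
    [NormedAddCommGroup E] [InnerProductSpace 𝕜 E] [FiniteDimensional 𝕜 E]
    {T : E →ₗ[𝕜] E} (hT : T.IsSymmetric) {c : ℝ} (hc : 0 ≤ c)
    (hle : ∀ x, |re (inner 𝕜 (T x) x)| ≤ c * ‖x‖ ^ 2) (x : E) :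
    ‖T x‖ ≤ c * ‖x‖ := by
  set T' : E →L[𝕜] E := LinearMap.toContinuousLinearMap T
  have hnorm : ‖T'‖ ≤ c := by
    rw [T'.norm_eq_iSup_rayleighQuotient hT]
    refine ciSup_le fun y => ?_
    rcases eq_or_ne y 0 with rfl | hy
    · simpa using hc
    · rw [ContinuousLinearMap.rayleighQuotient, ContinuousLinearMap.reApplyInnerSelf_apply,
        abs_div, abs_sq, div_le_iff₀ (by positivity)]
      exact hle y
  exact T'.le_of_opNorm_le hnorm x

section RandomMatrix

variable {Ω ι κ : Type*} [MeasurableSpace Ω] {μ : Measure Ω}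

noncomputable def Matrix.entrywiseIntegral (H : Ω → Matrix ι κ ℝ) (μ : Measure Ω) : Matrix ι κ ℝ :=
  Matrix.of fun i j => ∫ ω, H ω i j ∂μ

theorem Matrix.isSymm_entrywiseIntegral {H : Ω → Matrix ι ι ℝ} (hH : ∀ᵐ ω ∂μ, (H ω).IsSymm) :
    (entrywiseIntegral H μ).IsSymm :=
  IsSymm.ext fun i j => integral_congr_ae <| hH.mono fun _ hω => hω.apply i j

variable [Fintype ι] [Fintype κ] [DecidableEq κ]

theorem Matrix.inner_toEuclideanLin_eq_sum (M : Matrix ι κ ℝ) (v : EuclideanSpace ℝ ι)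
    (w : EuclideanSpace ℝ κ) :
    inner ℝ v (M.toEuclideanLin w) = ∑ i, ∑ j, v i * M i j * w j := by
  simp [Matrix.toLpLin_apply, Matrix.mulVec, dotProduct, PiLp.inner_apply,
    Finset.mul_sum, mul_assoc, mul_comm, mul_left_comm]

variable {H : Ω → Matrix ι κ ℝ}

theorem integrable_inner_toEuclideanLin (hH : ∀ i j, Integrable (fun ω => H ω i j) μ)
    (v : EuclideanSpace ℝ ι) (w : EuclideanSpace ℝ κ) :
    Integrable (fun ω => inner ℝ v ((H ω).toEuclideanLin w)) μ := by
  simp_rw [Matrix.inner_toEuclideanLin_eq_sum]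
  exact integrable_finsetSum _ fun i _ => integrable_finsetSum _ fun j _ =>
    ((hH i j).const_mul (v i)).mul_const (w j)

theorem integral_inner_toEuclideanLin (hH : ∀ i j, Integrable (fun ω => H ω i j) μ)
    (v : EuclideanSpace ℝ ι) (w : EuclideanSpace ℝ κ) :
    ∫ ω, inner ℝ v ((H ω).toEuclideanLin w) ∂μ =
      inner ℝ v ((Matrix.entrywiseIntegral H μ).toEuclideanLin w) := by
  simp_rw [Matrix.inner_toEuclideanLin_eq_sum]
  rw [integral_finsetSum _ fun i _ => integrable_finsetSum _ fun j _ =>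
    ((hH i j).const_mul (v i)).mul_const (w j)]
  refine Finset.sum_congr rfl fun i _ => ?_
  rw [integral_finsetSum _ fun j _ => ((hH i j).const_mul (v i)).mul_const (w j)]
  refine Finset.sum_congr rfl fun j _ => ?_
  rw [integral_mul_const, integral_const_mul, Matrix.entrywiseIntegral, Matrix.of_apply]

end RandomMatrix

theorem uncorrelated_preconditioner_expected_sgr_general
    {Ω : Type*} [MeasurableSpace Ω] (P : Measure Ω) [IsProbabilityMeasure P]
    (n : ℕ) (H : Ω → Matrix (Fin n) (Fin n) ℝ) (g : Ω → EuclideanSpace ℝ (Fin n))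
    (hHint : ∀ i j, Integrable (fun ω => H ω i j) P)
    (G : EuclideanSpace ℝ (Fin n))
    (EH : Matrix (Fin n) (Fin n) ℝ) (hEH : ∀ i j, EH i j = ∫ ω, H ω i j ∂P)
    (c₁ c₂ : ℝ) (hc₂ : 0 < c₂) (hc : c₂ ≤ c₁)
    (hbdd : ∀ᵐ ω ∂P, (H ω).IsSymm ∧
      ∀ v : EuclideanSpace ℝ (Fin n),
        c₂ * ‖v‖ ^ 2 ≤ (inner ℝ v (Matrix.toEuclideanLin (H ω) v) : ℝ) ∧
        (inner ℝ v (Matrix.toEuclideanLin (H ω) v) : ℝ) ≤ c₁ * ‖v‖ ^ 2)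
    (huncorr : (∫ ω, Matrix.toEuclideanLin (H ω) (g ω) ∂P) = Matrix.toEuclideanLin EH G) :
    ‖∫ ω, -(Matrix.toEuclideanLin (H ω) (g ω)) ∂P‖ ≤ c₁ * ‖G‖ ∧
      (inner ℝ (∫ ω, -(Matrix.toEuclideanLin (H ω) (g ω)) ∂P) G : ℝ) ≤ -c₂ * ‖G‖ ^ 2 := by
  have hEH' : EH = Matrix.entrywiseIntegral H P := Matrix.ext hEH
  have hquad (v : EuclideanSpace ℝ (Fin n)) :
      c₂ * ‖v‖ ^ 2 ≤ inner ℝ v (EH.toEuclideanLin v) ∧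
        inner ℝ v (EH.toEuclideanLin v) ≤ c₁ * ‖v‖ ^ 2 := by
    rw [hEH', ← integral_inner_toEuclideanLin hHint]
    have hint := integrable_inner_toEuclideanLin hHint v v
    constructor
    · simpa using integral_mono_ae (integrable_const _) hint (hbdd.mono fun _ hω => (hω.2 v).1)
    · simpa using integral_mono_ae hint (integrable_const _) (hbdd.mono fun _ hω => (hω.2 v).2)
  have hsymm : EH.toEuclideanLin.IsSymmetric := by
    rw [Matrix.isSymmetric_toEuclideanLin_iff, Matrix.isHermitian_iff_isSymm, hEH']
    exact Matrix.isSymm_entrywiseIntegral (hbdd.mono fun _ hω => hω.1)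
  have hnorm : ‖EH.toEuclideanLin G‖ ≤ c₁ * ‖G‖ :=
    hsymm.norm_apply_le_of_abs_inner_le (hc₂.le.trans hc) (fun v => by
      rw [RCLike.re_to_real, real_inner_comm, abs_le]
      constructor <;> nlinarith [hquad v, sq_nonneg ‖v‖]) G
  rw [integral_neg, huncorr, norm_neg, inner_neg_left, real_inner_comm]
  exact ⟨hnorm, by linarith [(hquad G).1]⟩

/-- A random preconditioner with bounded eigenvalues, uncorrelated with the
stochastic gradient, gives a direction satisfying the Bottou-like expected conditions. -/
theorem uncorrelated_preconditioner_expected_sgr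
    {Ω : Type*} [MeasurableSpace Ω] (P : Measure Ω) [IsProbabilityMeasure P]
    (n : ℕ) (H : Ω → Matrix (Fin n) (Fin n) ℝ) (g : Ω → EuclideanSpace ℝ (Fin n))
    (hHint : ∀ i j, Integrable (fun ω => H ω i j) P)
    (hgint : Integrable g P)
    (hdint : Integrable (fun ω => Matrix.toEuclideanLin (H ω) (g ω)) P)
    (G : EuclideanSpace ℝ (Fin n)) (hG : G = ∫ ω, g ω ∂P)
    (EH : Matrix (Fin n) (Fin n) ℝ) (hEH : ∀ i j, EH i j = ∫ ω, H ω i j ∂P)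
    (c₁ c₂ : ℝ) (hc₂ : 0 < c₂) (hc : c₂ ≤ c₁)
    (hbdd : ∀ᵐ ω ∂P, (H ω).IsSymm ∧
      ∀ v : EuclideanSpace ℝ (Fin n),
        c₂ * ‖v‖ ^ 2 ≤ (inner ℝ v (Matrix.toEuclideanLin (H ω) v) : ℝ) ∧
        (inner ℝ v (Matrix.toEuclideanLin (H ω) v) : ℝ) ≤ c₁ * ‖v‖ ^ 2)
    (huncorr : (∫ ω, Matrix.toEuclideanLin (H ω) (g ω) ∂P) = Matrix.toEuclideanLin EH G) :
    ‖∫ ω, -(Matrix.toEuclideanLin (H ω) (g ω)) ∂P‖ ≤ c₁ * ‖G‖ ∧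
      (inner ℝ (∫ ω, -(Matrix.toEuclideanLin (H ω) (g ω)) ∂P) G : ℝ) ≤ -c₂ * ‖G‖ ^ 2 :=
  uncorrelated_preconditioner_expected_sgr_general P n H g hHint G EH hEH c₁ c₂ hc₂ hc hbdd huncorr
end

section
/- Let f₁, …, f_N : ℝⁿ → ℝ be differentiable, f = (1/N) Σᵢ fᵢ, and suppose f is L-smooth (L > 0) and attains its minimum f* over ℝⁿ. If f satisfies the strong growth condition with constant ρ > 0, i.e., (1/N) Σᵢ ‖∇fᵢ(x)‖² ≤ ρ‖∇f(x)‖² for all x, then f satisfies the weak growth condition with the same constant: (1/N) Σᵢ ‖∇fᵢ(x)‖² ≤ 2ρL(f(x) − f*) for all x. -/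
/-! Smoothness alone bounds the gradient by the optimality gap: one gradient step of length `1/L`
from `x` decreases `f` by at least `‖∇f x‖² / (2L)` (descent lemma), and `f` cannot go below `f*`.
Chaining `‖∇f x‖² ≤ 2L (f x - f*)` with the strong growth condition gives the weak one. -/

open scoped RealInnerProductSpace

section LipschitzGradient

variable {E : Type*} [NormedAddCommGroup E] [InnerProductSpace ℝ E] [CompleteSpace E]
  {f : E → ℝ}

theorem hasDerivAt_comp_add_smul {x v : E} {t : ℝ} (hf : DifferentiableAt ℝ f (x + t • v)) :
    HasDerivAt (fun s : ℝ => f (x + s • v)) ⟪gradient f (x + t • v), v⟫ t := by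
  have hline : HasDerivAt (fun s : ℝ => x + s • v) v t := by
    simpa using ((hasDerivAt_id t).smul_const v).const_add x
  exact (hf.hasFDerivAt.comp_hasDerivAt t hline).congr_deriv inner_gradient_left.symm

theorem le_add_inner_gradient_add_of_lipschitz_gradient (hf : Differentiable ℝ f) {L : ℝ}
    (hlip : ∀ y z, ‖gradient f y - gradient f z‖ ≤ L * ‖y - z‖) (x y : E) :
    f y ≤ f x + ⟪gradient f x, y - x⟫ + L / 2 * ‖y - x‖ ^ 2 := by
  set v := y - x
  set g := gradient f x
  let h : ℝ → ℝ := fun t => f (x + t • v) - t * ⟪g, v⟫ - L / 2 * t ^ 2 * ‖v‖ ^ 2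
  have hderiv : ∀ t, HasDerivAt h (⟪gradient f (x + t • v), v⟫ - ⟪g, v⟫ - L * t * ‖v‖ ^ 2) t := by
    intro t
    have hlinear : HasDerivAt (fun s : ℝ => s * ⟪g, v⟫) ⟪g, v⟫ t := by
      simpa using (hasDerivAt_id t).mul_const ⟪g, v⟫
    have hquad : HasDerivAt (fun s : ℝ => L / 2 * s ^ 2 * ‖v‖ ^ 2) (L * t * ‖v‖ ^ 2) t :=
      (((hasDerivAt_pow 2 t).const_mul (L / 2)).mul_const (‖v‖ ^ 2)).congr_deriv (by ring)
    exact ((hasDerivAt_comp_add_smul (hf _)).sub hlinear).sub hquad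
  have hderiv_nonpos : ∀ t ∈ interior (Set.Icc (0 : ℝ) 1), deriv h t ≤ 0 := by
    intro t ht
    rw [interior_Icc] at ht
    have hgrad : ‖gradient f (x + t • v) - g‖ ≤ L * t * ‖v‖ := by
      simpa [norm_smul, abs_of_pos ht.1, mul_assoc] using hlip (x + t • v) x
    have hcs : ⟪gradient f (x + t • v) - g, v⟫ ≤ L * t * ‖v‖ * ‖v‖ :=
      (real_inner_le_norm _ _).trans (mul_le_mul_of_nonneg_right hgrad (norm_nonneg v))
    rw [(hderiv t).deriv]
    rw [inner_sub_left] at hcs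
    linarith
  have hanti : AntitoneOn h (Set.Icc 0 1) :=
    antitoneOn_of_deriv_nonpos (convex_Icc 0 1)
      (fun t _ => (hderiv t).continuousAt.continuousWithinAt)
      (fun t _ => (hderiv t).differentiableAt.differentiableWithinAt) hderiv_nonpos
  have h_one_le_zero : h 1 ≤ h 0 := hanti (by norm_num) (by norm_num) zero_le_one
  have h_zero : h 0 = f x := by simp [h]
  have h_one : h 1 = f y - ⟪g, v⟫ - L / 2 * ‖v‖ ^ 2 := by simp [h, v]
  linarith

theorem sq_norm_gradient_le_of_lipschitz_gradient (hf : Differentiable ℝ f) {L : ℝ} (hL : 0 < L)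
    (hlip : ∀ y z, ‖gradient f y - gradient f z‖ ≤ L * ‖y - z‖) {m : ℝ} (hm : ∀ y, m ≤ f y)
    (x : E) : ‖gradient f x‖ ^ 2 ≤ 2 * L * (f x - m) := by
  set g := gradient f x
  have hstep := le_add_inner_gradient_add_of_lipschitz_gradient hf hlip x (x - L⁻¹ • g)
  have hdecrease : f (x - L⁻¹ • g) ≤ f x - ‖g‖ ^ 2 / (2 * L) := by
    rw [sub_sub_cancel_left, inner_neg_right, real_inner_smul_right, real_inner_self_eq_norm_sq,
      norm_neg, norm_smul, Real.norm_of_nonneg (inv_nonneg.mpr hL.le)] at hstep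
    convert hstep using 1
    field_simp
    ring
  have hgap : ‖g‖ ^ 2 / (2 * L) ≤ f x - m := by linarith [hm (x - L⁻¹ • g)]
  rwa [div_le_iff₀ (by positivity), mul_comm] at hgap

end LipschitzGradient

theorem sgc_implies_wgc_general
    (n N : ℕ) (f_ : Fin N → (EuclideanSpace ℝ (Fin n) → ℝ))
    (f : EuclideanSpace ℝ (Fin n) → ℝ)
    (L : ℝ) (hL : 0 < L) (hfdiff : Differentiable ℝ f)
    (hlip : ∀ y z : EuclideanSpace ℝ (Fin n), ‖gradient f y - gradient f z‖ ≤ L * ‖y - z‖)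
    (fstar : ℝ) (hmin : ∀ y, fstar ≤ f y)
    (ρ : ℝ) (hρ : 0 < ρ)
    (hSGC : ∀ x, (1 / (N : ℝ)) * ∑ i, ‖gradient (f_ i) x‖ ^ 2 ≤ ρ * ‖gradient f x‖ ^ 2) :
    ∀ x, (1 / (N : ℝ)) * ∑ i, ‖gradient (f_ i) x‖ ^ 2 ≤ 2 * ρ * L * (f x - fstar) := by
  intro x
  calc (1 / (N : ℝ)) * ∑ i, ‖gradient (f_ i) x‖ ^ 2 ≤ ρ * ‖gradient f x‖ ^ 2 := hSGC x
    _ ≤ ρ * (2 * L * (f x - fstar)) := by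
      gcongr
      exact sq_norm_gradient_le_of_lipschitz_gradient hfdiff hL hlip hmin x
    _ = 2 * ρ * L * (f x - fstar) := by ring

/-- Under L-smoothness, the SGC implies the WGC with the same constant. -/
theorem sgc_implies_wgc
    (n N : ℕ) (hN : 0 < N) (f_ : Fin N → (EuclideanSpace ℝ (Fin n) → ℝ))
    (hdiff : ∀ i, Differentiable ℝ (f_ i))
    (f : EuclideanSpace ℝ (Fin n) → ℝ)
    (hf : ∀ x, f x = (1 / (N : ℝ)) * ∑ i, f_ i x)
    (L : ℝ) (hL : 0 < L) (hfdiff : Differentiable ℝ f)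
    (hlip : ∀ y z : EuclideanSpace ℝ (Fin n), ‖gradient f y - gradient f z‖ ≤ L * ‖y - z‖)
    (fstar : ℝ) (xstar : EuclideanSpace ℝ (Fin n))
    (hfstar : fstar = f xstar) (hmin : ∀ y, fstar ≤ f y)
    (ρ : ℝ) (hρ : 0 < ρ)
    (hSGC : ∀ x, (1 / (N : ℝ)) * ∑ i, ‖gradient (f_ i) x‖ ^ 2 ≤ ρ * ‖gradient f x‖ ^ 2) :
    ∀ x, (1 / (N : ℝ)) * ∑ i, ‖gradient (f_ i) x‖ ^ 2 ≤ 2 * ρ * L * (f x - fstar) :=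
  sgc_implies_wgc_general n N f_ f L hL hfdiff hlip fstar hmin ρ hρ hSGC
end
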